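/- arXiv:1808.08508 — 3 statements merged into one kernel-verified Lean document; each statement's English description precedes it below -/
import Mathlib

section
/- In the CU-proposing deferred acceptance algorithm, if a CU c is rejected by a UB u at some point during the execution, then in the final matching u does not hold c, and every CU held by u at the moment of rejection (and at termination whenever u is full) is strictly preferred by u to c. -/
/-- A one-to-many matching market between cellular users (CUs, indexed by
naturals `< numCU`) and unlicensed bands (UBs).  Each CU has a strict
preference list of acceptable UBs (earlier = more preferred); each UB has a
strict preference list of acceptable CUs and a capacity. -/
structure Market where
  numCU : ℕ
  numUB : ℕ
  cuPref : ℕ → List ℕ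
  ubPref : ℕ → List ℕ
  cap : ℕ → ℕ

namespace Market

variable (M : Market)

/-- Rank of UB `u` in CU `c`'s preference list (smaller = better). -/
def cuRank (c u : ℕ) : ℕ := (M.cuPref c).idxOf u

/-- Rank of CU `c` in UB `u`'s preference list (smaller = better). -/
def ubRank (u c : ℕ) : ℕ := (M.ubPref u).idxOf c

/-- The set of CUs assigned to UB `u` under assignment `μ`. -/
def assignedSet (μ : ℕ → Option ℕ) (u : ℕ) : Finset ℕ :=
  (Finset.range M.numCU).filter (fun c => μ c = some u)

/-- `μ` is a matching: only genuine CUs are matched, capacities respected. -/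
def IsMatching (μ : ℕ → Option ℕ) : Prop :=
  (∀ c, M.numCU ≤ c → μ c = none) ∧ ∀ u, (M.assignedSet μ u).card ≤ M.cap u

/-- Individual rationality: every matched pair is mutually acceptable. -/
def IndivRational (μ : ℕ → Option ℕ) : Prop :=
  ∀ c u, μ c = some u → u ∈ M.cuPref c ∧ c ∈ M.ubPref u

/-- `(c, u)` is a blocking pair of `μ`. -/
def BlockingPair (μ : ℕ → Option ℕ) (c u : ℕ) : Prop :=
  c < M.numCU ∧ u ∈ M.cuPref c ∧ c ∈ M.ubPref u ∧
  (∀ u', μ c = some u' → M.cuRank c u < M.cuRank c u') ∧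
  ((M.assignedSet μ u).card < M.cap u ∨
    ∃ c' ∈ M.assignedSet μ u, M.ubRank u c < M.ubRank u c')

/-- Stability: a matching, individually rational, with no blocking pair. -/
def Stable (μ : ℕ → Option ℕ) : Prop :=
  M.IsMatching μ ∧ M.IndivRational μ ∧ ∀ c u, ¬ M.BlockingPair μ c u

/-- State of the deferred-acceptance algorithm: the remaining (not yet
proposed-to) part of every CU's list and the current tentative assignment. -/
structure DAState where
  rem : ℕ → List ℕ
  asg : ℕ → Option ℕ

/-- Initial state: full preference lists, nobody matched. -/
def initState : DAState := ⟨M.cuPref, fun _ => none⟩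

/-- CU `c` proposes to the top UB remaining on its list; that UB tentatively
retains the best acceptable proposers/holders up to capacity. -/
def daStepAt (c : ℕ) (s : DAState) : DAState :=
  match s.rem c with
  | [] => s
  | u :: rest =>
    let rem' := fun c' => if c' = c then rest else s.rem c'
    if c ∈ M.ubPref u then
      let contenders := (M.ubPref u).filter (fun c' => decide (s.asg c' = some u) || (c' == c))
      let kept := contenders.take (M.cap u)
      let asg' := fun c' =>
        if c' ∈ kept then some u
        else if s.asg c' = some u ∨ c' = c then none
        else s.asg c'
      ⟨rem', asg'⟩
    else ⟨rem', s.asg⟩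

/-- One step of (deterministic) deferred acceptance: the first unmatched CU
with a nonempty remaining list proposes. -/
def daStep (s : DAState) : DAState :=
  match (List.range M.numCU).find? (fun c => (s.asg c).isNone && !(s.rem c).isEmpty) with
  | none => s
  | some c => M.daStepAt c s

/-- Iterate the deferred-acceptance step `n` times. -/
def daRun (M : Market) : ℕ → DAState → DAState
  | 0, s => s
  | n + 1, s => daRun M n (M.daStep s)

/-- Fuel certainly sufficient for termination: total length of all lists. -/
def daFuel : ℕ := ((List.range M.numCU).map (fun c => (M.cuPref c).length)).sum + 1

/-- The matching produced by the CU-proposing deferred-acceptance algorithm. -/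
def DA : ℕ → Option ℕ := (M.daRun M.daFuel M.initState).asg

end Market


/-- CU `c` is rejected by UB `u` at step `n` of deferred acceptance: before
the step `c` is held by `u`, or `c` is the current proposer and `u` is the
UB it proposes to, and after the step `c` is not assigned to `u`. -/
def Market.RejectedAt (M : Market) (c u n : ℕ) : Prop :=
  ((M.daRun n M.initState).asg c = some u ∨
    ((List.range M.numCU).find?
        (fun c' => ((M.daRun n M.initState).asg c').isNone
          && !((M.daRun n M.initState).rem c').isEmpty) = some c ∧
      ((M.daRun n M.initState).rem c).head? = some u)) ∧
  (M.daStep (M.daRun n M.initState)).asg c ≠ some u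

/-!
Once `u` rejects `c`, it holds `cap u` CUs that it ranks above `c`, and only such CUs: at the
rejection it keeps its `cap u` best contenders, and `c` is not among them. This persists, because
at every later proposal to `u` the current holders alone already supply `cap u` contenders ranked
above `c`, so whatever `u` keeps is ranked above `c`. Every proposal consumes an entry of a
preference list and the fuel exceeds their total length, so the run continues past the rejection
and the property holds for the outcome. A CU unacceptable to `u` has rank `length` and is beaten
by every CU that `u` can ever hold, since UBs hold only acceptable CUs.
-/

namespace List

theorem idxOf_filter {α : Type*} [BEq α] [LawfulBEq α] {p : α → Bool} {a : α}
    (l : List α) (ha : p a) :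
    (l.filter p).idxOf a = (l.take (l.idxOf a)).countP p := by
  induction l with
  | nil => simp
  | cons b l ih =>
    by_cases hb : b = a
    · subst hb
      simp [ha]
    · have hba : (b == a) = false := by simpa using hb
      by_cases hpb : p b <;> simp [hpb, idxOf_cons, hba, ih]

theorem take_filter_sublist_take {α : Type*} {p : α → Bool} {k m : ℕ} {l : List α}
    (h : k ≤ (l.take m).countP p) : (l.filter p).take k <+ l.take m := by
  have hk : k ≤ ((l.take m).filter p).length := by rwa [← countP_eq_length_filter]
  nth_rw 1 [← take_append_drop m l]
  rw [filter_append, take_append_of_le_length hk]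
  exact (take_sublist _ _).trans filter_sublist

theorem le_countP_take_idxOf {α : Type*} [BEq α] [LawfulBEq α] {p : α → Bool} {k : ℕ}
    {a : α} {l : List α} (ha : a ∈ l) (hp : p a) (h : a ∉ (l.filter p).take k) :
    k ≤ (l.take (l.idxOf a)).countP p := by
  rwa [mem_take_iff_idxOf_lt (mem_filter.2 ⟨ha, hp⟩), not_lt, idxOf_filter _ hp] at h

end List

namespace Market

variable (M : Market)

def proposer (s : DAState) : Option ℕ :=
  (List.range M.numCU).find? (fun c => (s.asg c).isNone && !(s.rem c).isEmpty)

def contender (s : DAState) (c₀ v c : ℕ) : Bool :=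
  decide (s.asg c = some v) || (c == c₀)

def kept (s : DAState) (c₀ v : ℕ) : List ℕ :=
  ((M.ubPref v).filter (contender s c₀ v)).take (M.cap v)

def HoldsAcceptable (μ : ℕ → Option ℕ) : Prop :=
  ∀ x w, μ x = some w → x ∈ M.ubPref w

def FullAbove (u c : ℕ) (μ : ℕ → Option ℕ) : Prop :=
  (∀ x, μ x = some u → M.ubRank u x < M.ubRank u c) ∧
    M.cap u ≤ ((M.ubPref u).take (M.ubRank u c)).countP (fun x => μ x = some u)

def remaining (s : DAState) : ℕ :=
  ∑ c ∈ Finset.range M.numCU, (s.rem c).length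

variable {M}

section Step

variable {s : DAState} {c₀ v w x : ℕ} {rest : List ℕ}

theorem daStepAt_of_rem_eq_nil (h : s.rem c₀ = []) : M.daStepAt c₀ s = s := by
  simp [daStepAt, h]

theorem daStepAt_rem (h : s.rem c₀ = v :: rest) :
    (M.daStepAt c₀ s).rem = fun c => if c = c₀ then rest else s.rem c := by
  unfold daStepAt
  rw [h]
  dsimp only
  split <;> rfl

theorem daStepAt_asg_of_not_mem (h : s.rem c₀ = v :: rest) (hmem : c₀ ∉ M.ubPref v) :
    (M.daStepAt c₀ s).asg = s.asg := by
  simp [daStepAt, h, hmem]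

theorem daStepAt_asg (h : s.rem c₀ = v :: rest) (hmem : c₀ ∈ M.ubPref v) (x : ℕ) :
    (M.daStepAt c₀ s).asg x =
      if x ∈ M.kept s c₀ v then some v
      else if s.asg x = some v ∨ x = c₀ then none
      else s.asg x := by
  simp only [daStepAt, h, if_pos hmem]
  rfl

theorem mem_ubPref_of_mem_kept (hx : x ∈ M.kept s c₀ v) : x ∈ M.ubPref v :=
  (List.mem_filter.1 (List.mem_of_mem_take hx)).1

theorem contender_of_mem_kept (hx : x ∈ M.kept s c₀ v) : contender s c₀ v x :=
  (List.mem_filter.1 (List.mem_of_mem_take hx)).2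

theorem daStepAt_asg_eq_some_iff_mem_kept (h : (s.rem c₀).head? = some w)
    (hmem : c₀ ∈ M.ubPref w) :
    (M.daStepAt c₀ s).asg x = some w ↔ x ∈ M.kept s c₀ w := by
  obtain ⟨rest, h⟩ := List.head?_eq_some_iff.1 h
  rw [daStepAt_asg h hmem]
  split_ifs <;> simp_all

theorem daStepAt_asg_eq_some_iff_of_not_proposes (hc₀ : s.asg c₀ = none)
    (h : (s.rem c₀).head? = some w → c₀ ∉ M.ubPref w) :
    (M.daStepAt c₀ s).asg x = some w ↔ s.asg x = some w := by
  cases hrem : s.rem c₀ with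
  | nil => rw [daStepAt_of_rem_eq_nil hrem]
  | cons v rest =>
    by_cases hmem : c₀ ∈ M.ubPref v
    · have hvw : v ≠ w := by
        rintro rfl
        exact h (by simp [hrem]) hmem
      rw [daStepAt_asg hrem hmem]
      split_ifs with hk hold
      · have := contender_of_mem_kept hk
        simp only [contender, Bool.or_eq_true, decide_eq_true_eq, beq_iff_eq] at this
        grind
      · grind
      · rfl
    · rw [daStepAt_asg_of_not_mem hrem hmem]

end Step

section Run

variable {s : DAState} {c₀ : ℕ}

theorem daStep_of_proposer_eq_none (h : M.proposer s = none) : M.daStep s = s := by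
  unfold proposer at h
  unfold daStep
  rw [h]

theorem daStep_of_proposer_eq_some (h : M.proposer s = some c₀) :
    M.daStep s = M.daStepAt c₀ s := by
  unfold proposer at h
  unfold daStep
  rw [h]

theorem proposer_spec (h : M.proposer s = some c₀) :
    c₀ < M.numCU ∧ s.asg c₀ = none ∧ s.rem c₀ ≠ [] := by
  have hfound := List.find?_some h
  have hlt := List.mem_of_find?_eq_some h
  simp only [Bool.and_eq_true, Option.isNone_iff_eq_none, Bool.not_eq_true',
    List.isEmpty_eq_false_iff] at hfound
  exact ⟨List.mem_range.1 hlt, hfound⟩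

theorem daRun_add (a b : ℕ) (s : DAState) :
    M.daRun (a + b) s = M.daRun b (M.daRun a s) := by
  induction a generalizing s with
  | zero => rw [Nat.zero_add]; rfl
  | succ a ih => rw [Nat.add_right_comm]; exact ih _

theorem daRun_succ' (n : ℕ) (s : DAState) : M.daRun (n + 1) s = M.daStep (M.daRun n s) :=
  M.daRun_add n 1 s

theorem daRun_of_daStep_eq (h : M.daStep s = s) (k : ℕ) : M.daRun k s = s := by
  induction k with
  | zero => rfl
  | succ k ih => rwa [daRun, h]

theorem daRun_induction {P : DAState → Prop} (hP : ∀ s, P s → P (M.daStep s)) (k : ℕ)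
    (hs : P s) : P (M.daRun k s) := by
  induction k generalizing s with
  | zero => exact hs
  | succ k ih => exact ih (hP s hs)

end Run

section Invariants

variable {s : DAState} {c₀ c u : ℕ}

theorem holdsAcceptable_initState : M.HoldsAcceptable M.initState.asg := by
  simp [HoldsAcceptable, initState]

theorem HoldsAcceptable.daStepAt (hμ : M.HoldsAcceptable s.asg) (hc₀ : s.asg c₀ = none) :
    M.HoldsAcceptable (M.daStepAt c₀ s).asg := by
  intro x w hx
  by_cases hprop : (s.rem c₀).head? = some w ∧ c₀ ∈ M.ubPref w
  · exact mem_ubPref_of_mem_kept ((daStepAt_asg_eq_some_iff_mem_kept hprop.1 hprop.2).1 hx)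
  · exact hμ x w ((daStepAt_asg_eq_some_iff_of_not_proposes hc₀ (not_and.1 hprop)).1 hx)

theorem HoldsAcceptable.daStep (hμ : M.HoldsAcceptable s.asg) :
    M.HoldsAcceptable (M.daStep s).asg := by
  cases h : M.proposer s with
  | none => rwa [daStep_of_proposer_eq_none h]
  | some c₀ => rw [daStep_of_proposer_eq_some h]; exact hμ.daStepAt (proposer_spec h).2.1

theorem HoldsAcceptable.ubRank_lt {μ : ℕ → Option ℕ} {x : ℕ} (hμ : M.HoldsAcceptable μ)
    (hc : c ∉ M.ubPref u) (hx : μ x = some u) : M.ubRank u x < M.ubRank u c := by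
  rw [ubRank, ubRank, List.idxOf_eq_length hc]
  exact List.idxOf_lt_length_of_mem (hμ x u hx)

theorem FullAbove.congr {μ ν : ℕ → Option ℕ} (hμ : M.FullAbove u c μ)
    (h : ∀ x, ν x = some u ↔ μ x = some u) : M.FullAbove u c ν := by
  refine ⟨fun x hx => hμ.1 x ((h x).1 hx), hμ.2.trans_eq (List.countP_congr fun x _ => ?_)⟩
  simp [h x]

theorem fullAbove_daStepAt_of_le_countP (h : (s.rem c₀).head? = some u)
    (hmem : c₀ ∈ M.ubPref u)
    (hcount : M.cap u ≤ ((M.ubPref u).take (M.ubRank u c)).countP (contender s c₀ u)) :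
    M.FullAbove u c (M.daStepAt c₀ s).asg := by
  have hholds x := daStepAt_asg_eq_some_iff_mem_kept (x := x) h hmem
  have hsub : (M.kept s c₀ u).Sublist ((M.ubPref u).take (M.ubRank u c)) :=
    List.take_filter_sublist_take hcount
  have hlen : (M.kept s c₀ u).length = M.cap u := by
    refine List.length_take_of_le (hcount.trans ?_)
    rw [← List.countP_eq_length_filter]
    exact (List.take_sublist _ _).countP_le
  refine ⟨fun x hx => ?_, ?_⟩
  · have hx' := hsub.subset ((hholds x).1 hx)
    exact (List.mem_take_iff_idxOf_lt (List.mem_of_mem_take hx')).1 hx'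
  · calc M.cap u = (M.kept s c₀ u).length := hlen.symm
      _ = (M.kept s c₀ u).countP (fun x => (M.daStepAt c₀ s).asg x = some u) :=
        (List.countP_eq_length.2 fun x hx => by simpa using (hholds x).2 hx).symm
      _ ≤ _ := hsub.countP_le

theorem FullAbove.daStepAt (hfull : M.FullAbove u c s.asg) (hc₀ : s.asg c₀ = none) :
    M.FullAbove u c (M.daStepAt c₀ s).asg := by
  by_cases hprop : (s.rem c₀).head? = some u ∧ c₀ ∈ M.ubPref u
  · refine fullAbove_daStepAt_of_le_countP hprop.1 hprop.2 (hfull.2.trans ?_)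
    exact List.countP_mono_left fun x _ hx => by simp_all [contender]
  · exact hfull.congr fun x =>
      daStepAt_asg_eq_some_iff_of_not_proposes hc₀ (not_and.1 hprop)

theorem FullAbove.daStep (hfull : M.FullAbove u c s.asg) : M.FullAbove u c (M.daStep s).asg := by
  cases h : M.proposer s with
  | none => rwa [daStep_of_proposer_eq_none h]
  | some c₀ => rw [daStep_of_proposer_eq_some h]; exact hfull.daStepAt (proposer_spec h).2.1

end Invariants

section Termination

variable {s : DAState} {c₀ : ℕ}

theorem remaining_daStepAt (hlt : c₀ < M.numCU) (h : s.rem c₀ ≠ []) :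
    M.remaining (M.daStepAt c₀ s) + 1 = M.remaining s := by
  obtain ⟨v, rest, hrem⟩ := List.exists_cons_of_ne_nil h
  have hmem : c₀ ∈ Finset.range M.numCU := Finset.mem_range.2 hlt
  unfold remaining
  have hothers : ∑ c ∈ (Finset.range M.numCU).erase c₀, ((M.daStepAt c₀ s).rem c).length =
      ∑ c ∈ (Finset.range M.numCU).erase c₀, (s.rem c).length :=
    Finset.sum_congr rfl fun c hc => by simp [daStepAt_rem hrem, Finset.ne_of_mem_erase hc]
  rw [← Finset.add_sum_erase _ _ hmem, ← Finset.add_sum_erase _ _ hmem, hothers,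
    daStepAt_rem hrem]
  simp only [if_pos, hrem, List.length_cons]
  omega

theorem remaining_daStep (h : M.proposer s = some c₀) :
    M.remaining (M.daStep s) + 1 = M.remaining s := by
  obtain ⟨hlt, -, hne⟩ := proposer_spec h
  rw [daStep_of_proposer_eq_some h]
  exact remaining_daStepAt hlt hne

theorem lt_remaining_of_proposer_daRun {n : ℕ} (h : M.proposer (M.daRun n s) = some c₀) :
    n < M.remaining s := by
  induction n generalizing s with
  | zero => have := remaining_daStep (s := s) h; omega
  | succ n ih =>
    cases hs : M.proposer s with
    | none =>
      rw [daRun_of_daStep_eq (daStep_of_proposer_eq_none hs), hs] at h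
      simp at h
    | some c₁ =>
      have := remaining_daStep hs
      have := ih h
      omega

theorem DA_eq_of_proposer {n : ℕ} (h : M.proposer (M.daRun n M.initState) = some c₀) :
    M.DA = (M.daRun (M.daFuel - (n + 1)) (M.daStep (M.daRun n M.initState))).asg := by
  have hn := lt_remaining_of_proposer_daRun h
  have hfuel : M.daFuel = n + 1 + (M.daFuel - (n + 1)) := by
    have : M.daFuel = M.remaining M.initState + 1 := rfl
    omega
  rw [← daRun_succ', ← daRun_add, ← hfuel]
  rfl

end Termination

namespace RejectedAt

variable {c u n : ℕ}

theorem exists_proposer (hrej : M.RejectedAt c u n) :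
    ∃ c₀, M.proposer (M.daRun n M.initState) = some c₀ := by
  obtain ⟨hin, hne⟩ := hrej
  change _ ∨ (M.proposer _ = some c ∧ _) at hin
  cases h : M.proposer (M.daRun n M.initState) with
  | some c₀ => exact ⟨c₀, rfl⟩
  | none =>
    rw [daStep_of_proposer_eq_none h] at hne
    rcases hin with hin | ⟨hin, -⟩
    · exact absurd hin hne
    · simp [h] at hin

theorem fullAbove (hrej : M.RejectedAt c u n) (hc : c ∈ M.ubPref u) :
    M.FullAbove u c (M.daStep (M.daRun n M.initState)).asg := by
  obtain ⟨c₀, hc₀⟩ := hrej.exists_proposer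
  obtain ⟨hin, hne⟩ := hrej
  change _ ∨ (M.proposer _ = some c ∧ _) at hin
  set s := M.daRun n M.initState
  obtain ⟨-, hasg₀, -⟩ := proposer_spec hc₀
  rw [daStep_of_proposer_eq_some hc₀] at hne ⊢
  have hprop : (s.rem c₀).head? = some u ∧ c₀ ∈ M.ubPref u := by
    by_contra hprop
    have hstays := daStepAt_asg_eq_some_iff_of_not_proposes (x := c) hasg₀ (not_and.1 hprop)
    rcases hin with hin | ⟨hin, hhead⟩
    · exact hne (hstays.2 hin)
    · obtain rfl : c₀ = c := Option.some.inj (hc₀.symm.trans hin)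
      exact hprop ⟨hhead, hc⟩
  have hcont : contender s c₀ u c := by
    rcases hin with hin | ⟨hin, -⟩
    · simp [contender, hin]
    · simp [contender, Option.some.inj (hc₀.symm.trans hin)]
  have hnot_kept : c ∉ M.kept s c₀ u := fun hk =>
    hne ((daStepAt_asg_eq_some_iff_mem_kept hprop.1 hprop.2).2 hk)
  exact fullAbove_daStepAt_of_le_countP hprop.1 hprop.2
    (List.le_countP_take_idxOf hc hcont hnot_kept)

end RejectedAt

end Market

/-- if `c` is rejected by `u` at some step, then in the final
matching `u` does not hold `c`; every CU held by `u` just after the rejection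
is strictly preferred by `u` to `c`; and at termination, whenever `u` is
full, every CU it holds is strictly preferred to `c`. -/
theorem DA_rejected_never_matched (M : Market) (c u n : ℕ)
    (hrej : M.RejectedAt c u n) :
    M.DA c ≠ some u ∧
    (∀ c' ∈ M.assignedSet (M.daStep (M.daRun n M.initState)).asg u,
      M.ubRank u c' < M.ubRank u c) ∧
    ((M.assignedSet M.DA u).card = M.cap u →
      ∀ c' ∈ M.assignedSet M.DA u, M.ubRank u c' < M.ubRank u c) := by
  obtain ⟨c₀, hc₀⟩ := hrej.exists_proposer
  suffices hafter : ∀ k x, (M.daRun k (M.daStep (M.daRun n M.initState))).asg x = some u →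
      M.ubRank u x < M.ubRank u c by
    have hfinal : ∀ x, M.DA x = some u → M.ubRank u x < M.ubRank u c :=
      M.DA_eq_of_proposer hc₀ ▸ hafter _
    exact ⟨fun hcu => (hfinal c hcu).false,
      fun x hx => hafter 0 x (Finset.mem_filter.1 hx).2,
      fun _ x hx => hfinal x (Finset.mem_filter.1 hx).2⟩
  intro k
  by_cases hc : c ∈ M.ubPref u
  · exact (M.daRun_induction (P := fun s => M.FullAbove u c s.asg) (fun _ h => h.daStep) k
      (hrej.fullAbove hc)).1
  · have hacc := M.daRun_induction (P := fun s => M.HoldsAcceptable s.asg)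
      (fun _ h => h.daStep) (n + 1 + k) M.holdsAcceptable_initState
    rw [M.daRun_add, M.daRun_succ'] at hacc
    exact fun x hx => hacc.ubRank_lt hc hx
end

section
/- The CU-proposing deferred acceptance algorithm with incomplete lists produces the same matching regardless of the order in which unmatched CUs propose (order-independence of deferred acceptance). -/
/-- `c` is a legal next proposer in state `s`. -/
def Market.ValidChoice (M : Market) (s : Market.DAState) (c : ℕ) : Prop :=
  c < M.numCU ∧ s.asg c = none ∧ s.rem c ≠ []

/-- Run deferred acceptance with an explicit sequence of proposer choices. -/
def Market.runChoices (M : Market) : List ℕ → Market.DAState → Market.DAState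
  | [], s => s
  | c :: cs, s => Market.runChoices M cs (M.daStepAt c s)

/-- Every choice in the list is legal at the state where it is made. -/
def Market.ValidRun (M : Market) : List ℕ → Market.DAState → Prop
  | [], _ => True
  | c :: cs, s => M.ValidChoice s c ∧ Market.ValidRun M cs (M.daStepAt c s)

/-- Terminal state: every CU is matched or has exhausted its list. -/
def Market.Terminal (M : Market) (s : Market.DAState) : Prop :=
  ∀ c < M.numCU, s.asg c ≠ none ∨ s.rem c = []

/-!
A proposal by an unmatched CU `c` to a UB `u` changes the assignment only over `u`, whose
holders become the top `cap u` acceptable CUs among the old holders and `c`. This choice rule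
is path independent: keeping the top `k` of (top `k` of `A`) ∪ `B` is the same as keeping the
top `k` of `A ∪ B`. Hence proposals by two different unmatched CUs commute, so the relation
"some legal proposer proposes" has the diamond property. By Church–Rosser any two runs from
the initial state can be extended to a common state, and a terminal state admits no further
proposal, so two terminal runs end in the same state.
-/

namespace List

variable {α : Type*}

theorem take_filter_eq_of_imp {f g : α → Bool} (hfg : ∀ x, f x → g x) :
    ∀ {L : List α} {k : ℕ}, (∀ x ∈ (L.filter g).take k, f x) →
      (L.filter f).take k = (L.filter g).take k
  | [], _, _ => rfl
  | a :: L, k, h => by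
    by_cases hga : g a
    · cases k with
      | zero => simp
      | succ k =>
        have hfa : f a := h a (by simp [hga])
        simp only [filter_cons, hfa, hga, if_true, take_succ_cons, cons.injEq, true_and]
        exact take_filter_eq_of_imp hfg fun x hx =>
          h x (by simpa [hga] using mem_cons_of_mem a hx)
    · have hfa : ¬ f a := fun hfa => hga (hfg a hfa)
      simp only [filter_cons, hfa, hga]
      exact take_filter_eq_of_imp hfg (by simpa [hga] using h)

theorem mem_take_filter_of_mem_take_filter_or {p q : α → Bool} {L : List α} {k : ℕ} {x : α}
    (hx : x ∈ (L.filter fun y => p y || q y).take k) (hpx : p x) : x ∈ (L.filter p).take k := by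
  set T := (L.filter fun y => p y || q y).take k
  have hprefix : T.filter p <+: (L.filter p).take k := by
    rw [prefix_take_iff]
    refine ⟨?_, (length_filter_le p T).trans (length_take_le k _)⟩
    have hfilter : ((L.filter fun y => p y || q y).filter p) = L.filter p := by
      rw [filter_filter]
      exact filter_congr fun y _ => by cases p y <;> rfl
    exact hfilter ▸ (take_prefix k _).filter p
  exact hprefix.subset (mem_filter.mpr ⟨hx, hpx⟩)

theorem take_filter_mem_take_filter_or [DecidableEq α] (L : List α) (k : ℕ) (p q : α → Bool) :
    (L.filter fun x => decide (x ∈ (L.filter p).take k) || q x).take k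
      = (L.filter fun x => p x || q x).take k := by
  refine take_filter_eq_of_imp ?_ fun x hx => ?_
  · intro x hx
    simp only [Bool.or_eq_true, decide_eq_true_eq] at hx ⊢
    exact hx.imp (fun h => (mem_filter.mp (mem_of_mem_take h)).2) id
  · by_cases hpx : p x
    · simp [mem_take_filter_of_mem_take_filter_or hx hpx]
    · have hpq : (p x || q x) = true := (mem_filter.mp (mem_of_mem_take hx)).2
      simp [hpx] at hpq
      simp [hpq]

end List

namespace Market

variable {M : Market} {s : DAState} {c c' u : ℕ} {rest : List ℕ}

theorem DAState.ext {s t : DAState} (hrem : s.rem = t.rem) (hasg : s.asg = t.asg) : s = t := by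
  cases s; cases t; congr

def retained (M : Market) (u : ℕ) (P : ℕ → Bool) : List ℕ :=
  ((M.ubPref u).filter P).take (M.cap u)

theorem retained_retained_or (u : ℕ) (p q : ℕ → Bool) :
    M.retained u (fun x => decide (x ∈ M.retained u p) || q x)
      = M.retained u (fun x => p x || q x) :=
  List.take_filter_mem_take_filter_or _ _ _ _

theorem of_mem_retained {P : ℕ → Bool} {x : ℕ} (hx : x ∈ M.retained u P) : P x :=
  (List.mem_filter.mp (List.mem_of_mem_take hx)).2

theorem daStepAt_rem_s15 (c : ℕ) (s : DAState) :
    (M.daStepAt c s).rem = Function.update s.rem c (s.rem c).tail := by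
  unfold daStepAt
  split
  · next h => simp [h]
  · next h =>
    funext y
    split_ifs <;> simp [h, Function.update_apply]

theorem daStepAt_asg_of_ne (hne : c' ≠ c) (h : s.asg c' = none) :
    (M.daStepAt c s).asg c' = none := by
  unfold daStepAt
  split
  · exact h
  · next u rest _ =>
    split_ifs
    · have hc' : c' ∉ M.retained u fun y => decide (s.asg y = some u) || y == c := fun hmem => by
        simpa [h, hne] using of_mem_retained hmem
      simp [← retained.eq_1, hc', hne, h]
    · exact h

theorem daStepAt_asg_eq_some_iff (hr : s.rem c = u :: rest) (hc : s.asg c = none) (x v : ℕ) :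
    (M.daStepAt c s).asg x = some v ↔
      if v = u ∧ c ∈ M.ubPref u then x ∈ M.retained u (fun y => decide (s.asg y = some u) || y == c)
      else s.asg x = some v := by
  unfold daStepAt
  rw [hr]
  by_cases hacc : c ∈ M.ubPref u
  · simp only [hacc, if_true, and_true, ← retained.eq_1]
    by_cases hx : x ∈ M.retained u fun y => decide (s.asg y = some u) || y == c
    · have hxu : s.asg x = some u ∨ x = c := by simpa using of_mem_retained hx
      grind
    · grind
  · simp [hacc]

theorem retained_daStepAt (hr : s.rem c = u :: rest) (hc : s.asg c = none) (u' c' : ℕ) :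
    M.retained u' (fun y => decide ((M.daStepAt c s).asg y = some u') || y == c') =
      if u' = u ∧ c ∈ M.ubPref u then
        M.retained u (fun y => (decide (s.asg y = some u) || y == c) || y == c')
      else M.retained u' (fun y => decide (s.asg y = some u') || y == c') := by
  split_ifs with h
  · obtain ⟨rfl, hacc⟩ := h
    rw [← retained_retained_or u' (fun y => decide (s.asg y = some u') || y == c) (· == c')]
    simp only [daStepAt_asg_eq_some_iff hr hc, hacc, and_self, if_true]
  · simp only [daStepAt_asg_eq_some_iff hr hc, if_neg h]

theorem daStepAt_asg_comm (hne : c ≠ c') (hc : M.ValidChoice s c) (hc' : M.ValidChoice s c') :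
    (M.daStepAt c' (M.daStepAt c s)).asg = (M.daStepAt c (M.daStepAt c' s)).asg := by
  obtain ⟨-, hac, hrc⟩ := hc
  obtain ⟨-, hac', hrc'⟩ := hc'
  obtain ⟨u, rest, hr⟩ := List.exists_cons_of_ne_nil hrc
  obtain ⟨u', rest', hr'⟩ := List.exists_cons_of_ne_nil hrc'
  have hr₁ : (M.daStepAt c s).rem c' = u' :: rest' := by simp [daStepAt_rem_s15, hne.symm, hr']
  have hr₂ : (M.daStepAt c' s).rem c = u :: rest := by simp [daStepAt_rem_s15, hne, hr]
  have hac₁ : (M.daStepAt c s).asg c' = none := daStepAt_asg_of_ne hne.symm hac'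
  have hac₂ : (M.daStepAt c' s).asg c = none := daStepAt_asg_of_ne hne hac
  funext x
  refine Option.ext fun v => ?_
  simp only [daStepAt_asg_eq_some_iff hr₁ hac₁, daStepAt_asg_eq_some_iff hr₂ hac₂]
  rw [retained_daStepAt hr hac, retained_daStepAt hr' hac']
  simp only [daStepAt_asg_eq_some_iff hr hac, daStepAt_asg_eq_some_iff hr' hac']
  by_cases hsame : u' = u ∧ c ∈ M.ubPref u ∧ c' ∈ M.ubPref u'
  · obtain ⟨rfl, hacc, hacc'⟩ := hsame
    by_cases hv : v = u' <;> simp [hv, hacc, hacc', Bool.or_right_comm]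
  · split_ifs <;> grind

theorem daStepAt_comm (hne : c ≠ c') (hc : M.ValidChoice s c) (hc' : M.ValidChoice s c') :
    M.daStepAt c' (M.daStepAt c s) = M.daStepAt c (M.daStepAt c' s) := by
  refine DAState.ext ?_ (daStepAt_asg_comm hne hc hc')
  simp only [daStepAt_rem_s15, Function.update_of_ne hne, Function.update_of_ne hne.symm]
  exact Function.update_comm hne _ _ _

theorem ValidChoice.daStepAt (h : M.ValidChoice s c') (hne : c' ≠ c) :
    M.ValidChoice (M.daStepAt c s) c' := by
  obtain ⟨hlt, hasg, hrem⟩ := h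
  exact ⟨hlt, daStepAt_asg_of_ne hne hasg, by simpa [daStepAt_rem_s15, hne] using hrem⟩

def Move (M : Market) (s t : DAState) : Prop :=
  ∃ c, M.ValidChoice s c ∧ M.daStepAt c s = t

theorem move_diamond {s t₁ t₂ : DAState} (h₁ : M.Move s t₁) (h₂ : M.Move s t₂) :
    ∃ t, Relation.ReflGen M.Move t₁ t ∧ Relation.ReflTransGen M.Move t₂ t := by
  obtain ⟨c, hc, rfl⟩ := h₁
  obtain ⟨c', hc', rfl⟩ := h₂
  by_cases hne : c = c'
  · subst hne
    exact ⟨_, .refl, .refl⟩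
  · exact ⟨_, .single ⟨c', hc'.daStepAt (Ne.symm hne), rfl⟩,
      .single ⟨c, hc.daStepAt hne, (daStepAt_comm hne hc hc').symm⟩⟩

theorem ValidRun.reflTransGen_move :
    ∀ {cs : List ℕ} {s : DAState}, M.ValidRun cs s →
      Relation.ReflTransGen M.Move s (M.runChoices cs s)
  | [], _, _ => .refl
  | _ :: _, _, ⟨hc, hrun⟩ => .head ⟨_, hc, rfl⟩ hrun.reflTransGen_move

theorem Terminal.eq_of_reflTransGen_move {s t : DAState} (hs : M.Terminal s)
    (h : Relation.ReflTransGen M.Move s t) : t = s := by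
  refine (Relation.reflTransGen_iff_eq fun t ⟨c, ⟨hlt, hasg, hrem⟩, _⟩ => ?_).mp h
  exact (hs c hlt).elim (· hasg) hrem

end Market

/-- deferred acceptance is order-independent — any two valid
terminal executions (regardless of the order in which unmatched CUs propose)
produce the same matching. -/
theorem DA_order_independent (M : Market) (cs₁ cs₂ : List ℕ)
    (h₁ : M.ValidRun cs₁ M.initState) (h₂ : M.ValidRun cs₂ M.initState)
    (t₁ : M.Terminal (M.runChoices cs₁ M.initState))
    (t₂ : M.Terminal (M.runChoices cs₂ M.initState)) :
    (M.runChoices cs₁ M.initState).asg = (M.runChoices cs₂ M.initState).asg := by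
  obtain ⟨t, ht₁, ht₂⟩ := Relation.church_rosser (fun _ _ _ => Market.move_diamond)
    h₁.reflTransGen_move h₂.reflTransGen_move
  rw [← t₁.eq_of_reflTransGen_move ht₁, ← t₂.eq_of_reflTransGen_move ht₂]
end

section
/- Rural hospitals theorem for the CU/UB market: every CU that is unmatched in one stable matching is unmatched in every stable matching, and every UB that does not fill its capacity in one stable matching is assigned exactly the same set of CUs in every stable matching. -/
/-!
Compare two stable matchings `μ` and `μ'` through their CU-join, in which every CU takes the
better of its two partners. Stability of both matchings bounds the number of CUs the join sends
to any UB `u` by the size of `u`'s assignment in `μ` (and in `μ'`), while the join leaves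
unmatched only CUs that are unmatched in `μ`. Counting all CUs fibre by fibre, the unmatched
ones forming the fibre over `none`, these inequalities must all be equalities. A UB that is not
full in `μ` receives in the join only CUs it already holds in `μ`, since any other such CU would
block `μ`; by symmetry the join's fibre over it equals its assignment in `μ` and in `μ'`.
-/

open Finset

theorem Finset.card_filter_eq_of_forall_card_filter_le {ι β : Type*} [DecidableEq β]
    {s : Finset ι} {f g : ι → β} (h : ∀ b, #{a ∈ s | f a = b} ≤ #{a ∈ s | g a = b}) (b : β) :
    #{a ∈ s | f a = b} = #{a ∈ s | g a = b} := by
  set t := insert b (s.image f ∪ s.image g)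
  have hf : #s = ∑ b ∈ t, #{a ∈ s | f a = b} :=
    card_eq_sum_card_fiberwise fun a ha =>
      mem_insert_of_mem (mem_union_left _ (mem_image_of_mem f ha))
  have hg : #s = ∑ b ∈ t, #{a ∈ s | g a = b} :=
    card_eq_sum_card_fiberwise fun a ha =>
      mem_insert_of_mem (mem_union_right _ (mem_image_of_mem g ha))
  exact (sum_eq_sum_iff_of_le fun b _ => h b).1 (hf.symm.trans hg) b (mem_insert_self _ _)

theorem List.idxOf_lt_idxOf_of_ne {α : Type*} [BEq α] [LawfulBEq α] {l : List α} {a b : α}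
    (ha : a ∈ l) (hab : a ≠ b) (h : l.idxOf a ≤ l.idxOf b) : l.idxOf a < l.idxOf b :=
  h.lt_of_ne fun he => hab ((List.idxOf_inj ha).1 he)

namespace Market

variable {M : Market} {μ μ' : ℕ → Option ℕ}

theorem mem_assignedSet {u c : ℕ} : c ∈ M.assignedSet μ u ↔ c < M.numCU ∧ μ c = some u := by
  simp [assignedSet]

theorem Stable.cap_le_of_prefers (h : M.Stable μ) {c u : ℕ} (hc : c < M.numCU)
    (hu : u ∈ M.cuPref c) (hcu : c ∈ M.ubPref u)
    (hpref : ∀ v, μ c = some v → M.cuRank c u < M.cuRank c v) :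
    M.cap u ≤ #(M.assignedSet μ u) ∧ ∀ c' ∈ M.assignedSet μ u, M.ubRank u c' ≤ M.ubRank u c := by
  have hnb := h.2.2 c u
  simp only [BlockingPair, not_and, not_or, not_exists, not_lt] at hnb
  obtain ⟨hfull, hbetter⟩ := hnb hc hu hcu hpref
  exact ⟨hfull, fun c' hc' => hbetter c' hc'⟩

variable (M μ μ') in
def cuJoin (c : ℕ) : Option ℕ :=
  match μ c, μ' c with
  | none, o => o
  | some v, none => some v
  | some v, some w => if M.cuRank c v ≤ M.cuRank c w then some v else some w

theorem cuJoin_eq_or (c : ℕ) : M.cuJoin μ μ' c = μ c ∨ M.cuJoin μ μ' c = μ' c := by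
  unfold cuJoin
  split <;> try split_ifs
  all_goals simp_all

theorem cuJoin_eq_none {c : ℕ} : M.cuJoin μ μ' c = none ↔ μ c = none ∧ μ' c = none := by
  unfold cuJoin
  split <;> try split_ifs
  all_goals simp_all

theorem cuRank_cuJoin_le_left {c u v : ℕ} (h : M.cuJoin μ μ' c = some u) (hv : μ c = some v) :
    M.cuRank c u ≤ M.cuRank c v := by
  unfold cuJoin at h
  split at h <;> try split_ifs at h
  all_goals simp_all
  all_goals omega

theorem cuJoin_comm (hμ : M.IndivRational μ) : M.cuJoin μ μ' = M.cuJoin μ' μ := by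
  funext c
  rcases hv : μ c with _ | v <;> rcases hw : μ' c with _ | w <;> simp only [cuJoin, hv, hw]
  have hvw : M.cuRank c v = M.cuRank c w → v = w := (List.idxOf_inj (hμ c v hv).1).1
  split_ifs <;> first | rfl | omega | simp only [Option.some.injEq]; omega

theorem Stable.cap_le_of_cuJoin_eq_some (hμ : M.Stable μ) (hμ' : M.IndivRational μ')
    {c u : ℕ} (hc : c < M.numCU) (hJ : M.cuJoin μ μ' c = some u) (hne : μ c ≠ some u) :
    μ' c = some u ∧ M.cap u ≤ #(M.assignedSet μ u) ∧
      ∀ c' ∈ M.assignedSet μ u, M.ubRank u c' ≤ M.ubRank u c := by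
  have hc' : μ' c = some u := ((cuJoin_eq_or c).resolve_left (hJ ▸ hne.symm)).symm.trans hJ
  obtain ⟨hu, hcu⟩ := hμ' c u hc'
  refine ⟨hc', hμ.cap_le_of_prefers hc hu hcu fun v hv => ?_⟩
  exact List.idxOf_lt_idxOf_of_ne hu (by rintro rfl; exact hne hv) (cuRank_cuJoin_le_left hJ hv)

theorem card_assignedSet_cuJoin_le (hμ : M.Stable μ) (hμ' : M.Stable μ') (u : ℕ) :
    #(M.assignedSet (M.cuJoin μ μ') u) ≤ #(M.assignedSet μ u) := by
  by_cases hsub : M.assignedSet (M.cuJoin μ μ') u ⊆ M.assignedSet μ u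
  · exact card_le_card hsub
  obtain ⟨c, hcJ, hcμ⟩ := not_subset.1 hsub
  obtain ⟨hcn, hcJ⟩ := mem_assignedSet.1 hcJ
  obtain ⟨hcμ', hfull, hrank⟩ :=
    hμ.cap_le_of_cuJoin_eq_some hμ'.2.1 hcn hcJ fun h => hcμ (mem_assignedSet.2 ⟨hcn, h⟩)
  by_cases hsub' : M.assignedSet (M.cuJoin μ μ') u ⊆ M.assignedSet μ' u
  · calc #(M.assignedSet (M.cuJoin μ μ') u) ≤ #(M.assignedSet μ' u) := card_le_card hsub'
      _ ≤ M.cap u := hμ'.1.2 u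
      _ ≤ #(M.assignedSet μ u) := hfull
  -- Otherwise `u` would have to rank `c` and `d` each above the other.
  obtain ⟨d, hdJ, hdμ'⟩ := not_subset.1 hsub'
  obtain ⟨hdn, hdJ⟩ := mem_assignedSet.1 hdJ
  rw [cuJoin_comm hμ.2.1] at hdJ
  obtain ⟨hdμ, -, hrank'⟩ :=
    hμ'.cap_le_of_cuJoin_eq_some hμ.2.1 hdn hdJ fun h => hdμ' (mem_assignedSet.2 ⟨hdn, h⟩)
  have hdc : M.ubRank u d ≤ M.ubRank u c := hrank d (mem_assignedSet.2 ⟨hdn, hdμ⟩)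
  have hcd : M.ubRank u c ≤ M.ubRank u d := hrank' c (mem_assignedSet.2 ⟨hcn, hcμ'⟩)
  have hcd_eq : c = d := (List.idxOf_inj (hμ'.2.1 c u hcμ').2).1 (hcd.antisymm hdc)
  exact absurd (mem_assignedSet.2 ⟨hcn, hcd_eq ▸ hdμ⟩) hcμ

theorem filter_cuJoin_eq_none_subset (s : Finset ℕ) :
    {c ∈ s | M.cuJoin μ μ' c = none} ⊆ {c ∈ s | μ c = none} :=
  monotone_filter_right _ fun _ _ hc => (cuJoin_eq_none.1 hc).1

theorem card_filter_cuJoin_eq (hμ : M.Stable μ) (hμ' : M.Stable μ') (o : Option ℕ) :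
    #{c ∈ range M.numCU | M.cuJoin μ μ' c = o} = #{c ∈ range M.numCU | μ c = o} := by
  refine card_filter_eq_of_forall_card_filter_le (fun o => ?_) o
  cases o with
  | none => exact card_le_card (filter_cuJoin_eq_none_subset _)
  | some u => exact card_assignedSet_cuJoin_le hμ hμ' u

theorem card_assignedSet_cuJoin (hμ : M.Stable μ) (hμ' : M.Stable μ') (u : ℕ) :
    #(M.assignedSet (M.cuJoin μ μ') u) = #(M.assignedSet μ u) :=
  card_filter_cuJoin_eq hμ hμ' (some u)

theorem cuJoin_eq_none_of_eq_none (hμ : M.Stable μ) (hμ' : M.Stable μ') {c : ℕ}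
    (hc : c < M.numCU) (h : μ c = none) : M.cuJoin μ μ' c = none := by
  have heq := eq_of_subset_of_card_le (filter_cuJoin_eq_none_subset _)
    (card_filter_cuJoin_eq hμ hμ' none).ge
  have hmem : c ∈ {c ∈ range M.numCU | μ c = none} := mem_filter.2 ⟨mem_range.2 hc, h⟩
  rw [← heq] at hmem
  exact (mem_filter.1 hmem).2

theorem assignedSet_cuJoin_eq_of_lt_cap (hμ : M.Stable μ) (hμ' : M.Stable μ') {u : ℕ}
    (hu : #(M.assignedSet μ u) < M.cap u) :
    M.assignedSet (M.cuJoin μ μ') u = M.assignedSet μ u := by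
  refine eq_of_subset_of_card_le (fun c hc => ?_) (card_assignedSet_cuJoin hμ hμ' u).ge
  obtain ⟨hcn, hcJ⟩ := mem_assignedSet.1 hc
  by_contra hcμ
  have hfull := (hμ.cap_le_of_cuJoin_eq_some hμ'.2.1 hcn hcJ
    fun h => hcμ (mem_assignedSet.2 ⟨hcn, h⟩)).2.1
  omega

end Market

/-- rural hospitals theorem: a CU unmatched in one stable
matching is unmatched in every stable matching, and a UB that does not fill
its capacity in one stable matching is assigned exactly the same set of CUs
in every stable matching. -/
theorem rural_hospitals (M : Market) (μ μ' : ℕ → Option ℕ)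
    (hμ : M.Stable μ) (hμ' : M.Stable μ') :
    (∀ c < M.numCU, μ c = none → μ' c = none) ∧
    (∀ u, (M.assignedSet μ u).card < M.cap u →
      M.assignedSet μ' u = M.assignedSet μ u) := by
  refine ⟨fun c hc h => ?_, fun u hu => ?_⟩
  · exact (Market.cuJoin_eq_none.1 (Market.cuJoin_eq_none_of_eq_none hμ hμ' hc h)).2
  have hcard : #(M.assignedSet μ' u) = #(M.assignedSet μ u) := by
    rw [← Market.card_assignedSet_cuJoin hμ' hμ, ← Market.cuJoin_comm hμ.2.1,
      Market.card_assignedSet_cuJoin hμ hμ']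
  have hu' : #(M.assignedSet μ' u) < M.cap u := hcard ▸ hu
  rw [← Market.assignedSet_cuJoin_eq_of_lt_cap hμ hμ' hu,
    ← Market.assignedSet_cuJoin_eq_of_lt_cap hμ' hμ hu', Market.cuJoin_comm hμ.2.1]
end
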